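/- arXiv:1503.04631 — 5 statements merged into one kernel-verified Lean document; each statement's English description precedes it below -/
import Mathlib

section
/- The polynomial P(x,y) = y²x(x-1) + y(-x³+x²+2x-1) - x² + x does not vanish at any point (x,y) with |x| = |y| = 1. -/
/-- The polynomial `P(x,y) = y²x(x-1) + y(-x³+x²+2x-1) - x² + x`, a defining
equation of the modular curve `X₁(13)`, does not vanish on the 2-torus. -/
theorem stmt_0 (x y : ℂ) (hx : ‖x‖ = 1) (hy : ‖y‖ = 1) :
    y ^ 2 * x * (x - 1) + y * (-x ^ 3 + x ^ 2 + 2 * x - 1) - x ^ 2 + x ≠ 0 := by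
  intro h
  have hx0 : x ≠ 0 := by intro h0; rw [h0] at hx; simp at hx
  have hy0 : y ≠ 0 := by intro h0; rw [h0] at hy; simp at hy
  set u := (starRingEnd ℂ) x with hu_def
  set v := (starRingEnd ℂ) y with hv_def
  have hu : x * u = 1 := by
    rw [hu_def, Complex.mul_conj, Complex.normSq_eq_norm_sq, hx]; norm_num
  have hv : y * v = 1 := by
    rw [hv_def, Complex.mul_conj, Complex.normSq_eq_norm_sq, hy]; norm_num
  have h2 : v ^ 2 * u * (u - 1) + v * (-u ^ 3 + u ^ 2 + 2 * u - 1) - u ^ 2 + u = 0 := by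
    have := congrArg (starRingEnd ℂ) h
    simpa [map_add, map_sub, map_mul, map_pow, map_neg, map_ofNat, ← hu_def, ← hv_def] using this
  have key : y * x * (x - 1) = 0 := by
    linear_combination (-1 : ℂ) * h + x ^ 3 * y ^ 2 * h2 +
      (x * y ^ 2 - x ^ 2 * y ^ 2 + v * y ^ 2 - v * x * y ^ 2 - 2 * v * x ^ 2 * y ^ 2
        - v ^ 2 * x * y ^ 2 + v ^ 2 * x ^ 2 * y ^ 2 + u * x ^ 2 * y ^ 2 + u * v * x * y ^ 2
        - u * v * x ^ 2 * y ^ 2 - u * v ^ 2 * x ^ 2 * y ^ 2 + u ^ 2 * v * x ^ 2 * y ^ 2) * hu +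
      (y - x - x * y + x ^ 2 - 2 * x ^ 2 * y + x ^ 3 * y - v * x * y + v * x ^ 2 * y) * hv
  have hx1 : x = 1 := by
    rcases mul_eq_zero.mp key with h' | h'
    · rcases mul_eq_zero.mp h' with h'' | h''
      · exact absurd h'' hy0
      · exact absurd h'' hx0
    · exact sub_eq_zero.mp h'
  rw [hx1] at h
  apply hy0
  linear_combination h
end

section
/- Let c : ℂ → ℂ be complex conjugation and let u, v be nonvanishing holomorphic functions on a c-stable open set U such that u∘c = conj∘u and v∘c = conj∘v. Then the pullback of η(u,v) under c equals −η(u,v). -/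
/-- The real 1-form `η(u,v) = log|u| darg(v) - log|v| darg(u)` evaluated at the
point `z` on the tangent vector `a`, where `darg(w) = Im(dw/w)`. -/
noncomputable def eta (u v : ℂ → ℂ) (z a : ℂ) : ℝ :=
  Real.log ‖u z‖ * (deriv v z * a / v z).im -
    Real.log ‖v z‖ * (deriv u z * a / u z).im

lemma aux_hasDerivAt (u : ℂ → ℂ) {z : ℂ} (hu : DifferentiableAt ℂ u z) :
    HasDerivAt (fun s => (starRingEnd ℂ) (u ((starRingEnd ℂ) s)))
      ((starRingEnd ℂ) (deriv u z)) ((starRingEnd ℂ) z) := by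
  have C : HasFDerivAt (fun s : ℂ => (starRingEnd ℂ) s)
      Complex.conjCLE.toContinuousLinearMap ((starRingEnd ℂ) z) :=
    Complex.conjCLE.hasFDerivAt
  have C2 : HasFDerivAt (fun s : ℂ => (starRingEnd ℂ) s)
      Complex.conjCLE.toContinuousLinearMap ((u ∘ (starRingEnd ℂ)) ((starRingEnd ℂ) z)) := by
    exact Complex.conjCLE.hasFDerivAt
  have H : HasFDerivAt u ((fderiv ℂ u z).restrictScalars ℝ) z :=
    (hu.hasFDerivAt).restrictScalars ℝ
  have H' : HasFDerivAt u ((fderiv ℂ u z).restrictScalars ℝ)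
      ((starRingEnd ℂ) ((starRingEnd ℂ) z)) := by simpa using H
  have total := C2.comp ((starRingEnd ℂ) z) (H'.comp ((starRingEnd ℂ) z) C)
  have happ : ∀ w : ℂ, fderiv ℂ u z w = w * deriv u z := by
    intro w
    conv_lhs => rw [show w = w • (1 : ℂ) by simp]
    rw [map_smul, fderiv_apply_one_eq_deriv]
    simp [smul_eq_mul]
  have key : (ContinuousLinearMap.smulRight (1 : ℂ →L[ℂ] ℂ)
        ((starRingEnd ℂ) (deriv u z))).restrictScalars ℝ =
      Complex.conjCLE.toContinuousLinearMap.comp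
        (((fderiv ℂ u z).restrictScalars ℝ).comp Complex.conjCLE.toContinuousLinearMap) := by
    ext a
    simp [happ, mul_comm]
  have total' : HasFDerivAt
      ((fun s : ℂ => (starRingEnd ℂ) s) ∘ u ∘ (fun s : ℂ => (starRingEnd ℂ) s))
      (ContinuousLinearMap.smulRight (1 : ℂ →L[ℂ] ℂ) ((starRingEnd ℂ) (deriv u z)))
      ((starRingEnd ℂ) z) :=
    hasFDerivAt_of_restrictScalars ℝ total key
  have h2 := total'.hasDerivAt
  simpa only [Function.comp_def, ContinuousLinearMap.smulRight_apply, ContinuousLinearMap.one_apply, one_smul] using h2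

lemma deriv_conj_eq (U : Set ℂ) (hU : IsOpen U)
    (hUc : ∀ z ∈ U, (starRingEnd ℂ) z ∈ U) (u : ℂ → ℂ)
    (hu : ∀ z ∈ U, DifferentiableAt ℂ u z)
    (huc : ∀ z ∈ U, u ((starRingEnd ℂ) z) = (starRingEnd ℂ) (u z))
    {z : ℂ} (hz : z ∈ U) :
    deriv u ((starRingEnd ℂ) z) = (starRingEnd ℂ) (deriv u z) := by
  have heq : u =ᶠ[nhds ((starRingEnd ℂ) z)]
      fun s => (starRingEnd ℂ) (u ((starRingEnd ℂ) s)) := by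
    filter_upwards [hU.mem_nhds (hUc z hz)] with s hs
    have := huc _ (hUc s hs)
    simpa using this
  exact ((aux_hasDerivAt u (hu z hz)).congr_of_eventuallyEq heq).deriv

/-- If `U` is stable under complex conjugation `c`, and `u, v` are nonvanishing
holomorphic functions on `U` with `u ∘ c = conj ∘ u` and `v ∘ c = conj ∘ v`,
then the pullback of `η(u,v)` under `c` equals `-η(u,v)`:
`η(u,v)(c z)(Dc(a)) = -η(u,v)(z)(a)` for `z ∈ U`, where `Dc(a) = conj a`. -/
theorem stmt_5 (U : Set ℂ) (hU : IsOpen U)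
    (hUc : ∀ z ∈ U, (starRingEnd ℂ) z ∈ U) (u v : ℂ → ℂ)
    (hu : ∀ z ∈ U, DifferentiableAt ℂ u z) (hu0 : ∀ z ∈ U, u z ≠ 0)
    (hv : ∀ z ∈ U, DifferentiableAt ℂ v z) (hv0 : ∀ z ∈ U, v z ≠ 0)
    (huc : ∀ z ∈ U, u ((starRingEnd ℂ) z) = (starRingEnd ℂ) (u z))
    (hvc : ∀ z ∈ U, v ((starRingEnd ℂ) z) = (starRingEnd ℂ) (v z)) :
    ∀ z ∈ U, ∀ a : ℂ,
      eta u v ((starRingEnd ℂ) z) ((starRingEnd ℂ) a) = -eta u v z a := by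
  intro z hz a
  have hdu := deriv_conj_eq U hU hUc u hu huc hz
  have hdv := deriv_conj_eq U hU hUc v hv hvc hz
  unfold eta
  rw [hdu, hdv, huc z hz, hvc z hz]
  have h1 : ((starRingEnd ℂ) (deriv u z) * (starRingEnd ℂ) a / (starRingEnd ℂ) (u z)).im
      = -(deriv u z * a / u z).im := by
    rw [← map_mul, ← map_div₀, Complex.conj_im]
  have h2 : ((starRingEnd ℂ) (deriv v z) * (starRingEnd ℂ) a / (starRingEnd ℂ) (v z)).im
      = -(deriv v z * a / v z).im := by
    rw [← map_mul, ← map_div₀, Complex.conj_im]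
  rw [h1, h2]
  simp [Complex.norm_conj]
  ring
end

section
/- Let ε be the Dirichlet character modulo 13 with ε(2) = ζ₆. Then τ(ε²)·τ(ε) = (4ζ₆ − 3)√13, where τ denotes the Gauss sum modulo 13 and ζ₆ = e^{2πi/6}. -/
open scoped Real


noncomputable def zz : ℂ := Complex.exp (2 * π * Complex.I / 13)

lemma z13 : zz ^ 13 = 1 := by
  rw [zz, ← Complex.exp_nat_mul]
  rw [show ((13:ℕ):ℂ) * (2 * π * Complex.I / 13) = 2 * π * Complex.I by push_cast; ring]
  exact Complex.exp_two_pi_mul_I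

lemma zsum : 1 + zz + zz^2 + zz^3 + zz^4 + zz^5 + zz^6 + zz^7 + zz^8 + zz^9 + zz^10 + zz^11 + zz^12 = 0 := by
  have h := (Complex.isPrimitiveRoot_exp 13 (by norm_num)).geom_sum_eq_zero (by norm_num)
  push_cast at h
  rw [show Complex.exp (2 * (π:ℂ) * Complex.I / 13) = zz from rfl] at h
  calc _ = ∑ i ∈ Finset.range 13, zz ^ i := by
          simp [Finset.sum_range_succ]; try ring
    _ = 0 := h

lemma wrel : (Complex.exp (2 * π * Complex.I / 6))^2 - Complex.exp (2 * π * Complex.I / 6) + 1 = 0 := by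
  rw [show (2 * ↑π * Complex.I / 6 : ℂ) = (↑(π/3):ℝ) * Complex.I by push_cast; ring]
  rw [Complex.exp_mul_I, ← Complex.ofReal_cos, ← Complex.ofReal_sin,
    Real.cos_pi_div_three, Real.sin_pi_div_three]
  have h3 : ((Real.sqrt 3 : ℝ):ℂ)^2 = 3 := by
    norm_cast
    rw [Real.sq_sqrt]; norm_num
  push_cast
  linear_combination (-1/4 : ℂ) * h3 + (((Real.sqrt 3:ℝ):ℂ)^2/4) * Complex.I_sq

lemma pair (a : ℕ) (ha : a ≤ 13) :
    zz^a + zz^(13-a) = ((2 * Real.cos (2*π*a/13) : ℝ) : ℂ) := by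
  have c1 : zz^a = Complex.exp ((↑(2*π*a/13):ℝ) * Complex.I) := by
    rw [zz, ← Complex.exp_nat_mul]; congr 1; push_cast; ring
  have c2 : zz^(13-a) = Complex.exp (-((↑(2*π*a/13):ℝ) * Complex.I)) := by
    rw [zz, ← Complex.exp_nat_mul]
    rw [show ((13 - a : ℕ) : ℂ) * (2 * ↑π * Complex.I / 13)
        = 2*π*Complex.I + -((↑(2*π*a/13):ℝ) * Complex.I) by
      rw [Nat.cast_sub ha]; push_cast; ring]
    rw [Complex.exp_add, Complex.exp_two_pi_mul_I, one_mul]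
  rw [c1, c2, ← neg_mul, Complex.exp_mul_I, Complex.exp_mul_I,
    ← Complex.ofReal_neg, ← Complex.ofReal_cos, ← Complex.ofReal_cos,
    ← Complex.ofReal_sin, ← Complex.ofReal_sin, Real.cos_neg, Real.sin_neg]
  push_cast
  ring

lemma gsq : (zz+zz^3+zz^4+zz^9+zz^10+zz^12-zz^2-zz^5-zz^6-zz^7-zz^8-zz^11)^2 = 13 := by
  linear_combination ((12:ℂ) + (-1:ℂ)*zz + (-2:ℂ)*zz^2 + (1:ℂ)*zz^3 + (-4:ℂ)*zz^4 + (-1:ℂ)*zz^5 + (2:ℂ)*zz^6 + (-3:ℂ)*zz^7 + (3:ℂ)*zz^9 + (-2:ℂ)*zz^10 + (1:ℂ)*zz^11) * z13 - zsum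

lemma sqrt13 : ((Real.sqrt 13 : ℝ) : ℂ)
    = zz+zz^3+zz^4+zz^9+zz^10+zz^12-zz^2-zz^5-zz^6-zz^7-zz^8-zz^11 := by
  have p1 : zz^1 + zz^12 = ((2 * Real.cos (2*π*(1:ℝ)/13) : ℝ) : ℂ) := by
    have h := pair 1 (by norm_num)
    rwa [show ((1:ℕ):ℝ) = (1:ℝ) by norm_num] at h
  have p2 : zz^2 + zz^11 = ((2 * Real.cos (2*π*(2:ℝ)/13) : ℝ) : ℂ) := by
    have h := pair 2 (by norm_num)
    rwa [show ((2:ℕ):ℝ) = (2:ℝ) by norm_num] at h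
  have p3 : zz^3 + zz^10 = ((2 * Real.cos (2*π*(3:ℝ)/13) : ℝ) : ℂ) := by
    have h := pair 3 (by norm_num)
    rwa [show ((3:ℕ):ℝ) = (3:ℝ) by norm_num] at h
  have p4 : zz^4 + zz^9 = ((2 * Real.cos (2*π*(4:ℝ)/13) : ℝ) : ℂ) := by
    have h := pair 4 (by norm_num)
    rwa [show ((4:ℕ):ℝ) = (4:ℝ) by norm_num] at h
  have p5 : zz^5 + zz^8 = ((2 * Real.cos (2*π*(5:ℝ)/13) : ℝ) : ℂ) := by
    have h := pair 5 (by norm_num)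
    rwa [show ((5:ℕ):ℝ) = (5:ℝ) by norm_num] at h
  have p6 : zz^6 + zz^7 = ((2 * Real.cos (2*π*(6:ℝ)/13) : ℝ) : ℂ) := by
    have h := pair 6 (by norm_num)
    rwa [show ((6:ℕ):ℝ) = (6:ℝ) by norm_num] at h
  set r : ℝ := 2 * Real.cos (2*π*(1:ℝ)/13) + 2 * Real.cos (2*π*(3:ℝ)/13)
      + 2 * Real.cos (2*π*(4:ℝ)/13) - 2 * Real.cos (2*π*(2:ℝ)/13)
      - 2 * Real.cos (2*π*(5:ℝ)/13) - 2 * Real.cos (2*π*(6:ℝ)/13) with hrdef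
  have hG : zz+zz^3+zz^4+zz^9+zz^10+zz^12-zz^2-zz^5-zz^6-zz^7-zz^8-zz^11 = (r : ℂ) := by
    rw [hrdef]
    simp only [Complex.ofReal_add, Complex.ofReal_sub, Complex.ofReal_mul,
      Complex.ofReal_ofNat] at p1 p2 p3 p4 p5 p6 ⊢
    linear_combination p1 + p3 + p4 - p2 - p5 - p6
  have hr2 : r^2 = 13 := by
    have := gsq; rw [hG] at this; exact_mod_cast this
  have pipos := Real.pi_pos
  have hrpos : 0 < r := by
    have m1 : Real.cos (2*π*(2:ℝ)/13) < Real.cos (2*π*(1:ℝ)/13) := by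
      apply Real.cos_lt_cos_of_nonneg_of_le_pi (by positivity) (by nlinarith) (by nlinarith)
    have m2 : Real.cos (2*π*(5:ℝ)/13) < Real.cos (2*π*(3:ℝ)/13) := by
      apply Real.cos_lt_cos_of_nonneg_of_le_pi (by positivity) (by nlinarith) (by nlinarith)
    have m3 : Real.cos (2*π*(6:ℝ)/13) < Real.cos (2*π*(4:ℝ)/13) := by
      apply Real.cos_lt_cos_of_nonneg_of_le_pi (by positivity) (by nlinarith) (by nlinarith)
    rw [hrdef]; linarith
  rw [show (13:ℝ) = r^2 from hr2.symm, Real.sqrt_sq hrpos.le, hG]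


lemma huniv13 : (Finset.univ : Finset (ZMod 13)) = (⟨([0,1,2,3,4,5,6,7,8,9,10,11,12] : List (ZMod 13)), by decide⟩ : Finset (ZMod 13)) := by decide

/-- Let `ε` be the Dirichlet character mod 13 with `ε(2) = ζ₆ = e^{2πi/6}`.
Then `τ(ε²)·τ(ε) = (4ζ₆ - 3)√13`, where `τ` is the Gauss sum mod 13. -/
theorem stmt_8 (ε : DirichletCharacter ℂ 13)
    (hε : ε 2 = Complex.exp (2 * π * Complex.I / 6)) :
    (∑ a : (ZMod 13)ˣ,
        (ε ^ 2) (a : ZMod 13) *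
          Complex.exp (2 * π * Complex.I * ((a : ZMod 13).val : ℂ) / 13)) *
      (∑ a : (ZMod 13)ˣ,
        ε (a : ZMod 13) *
          Complex.exp (2 * π * Complex.I * ((a : ZMod 13).val : ℂ) / 13)) =
      (4 * Complex.exp (2 * π * Complex.I / 6) - 3) * Real.sqrt 13 := by
  haveI : Fact (Nat.Prime 13) := ⟨by norm_num⟩
  have hsum : ∀ f : ZMod 13 → ℂ, f 0 = 0 →
      ∑ a : (ZMod 13)ˣ, f a = f 1 + f 2 + f 3 + f 4 + f 5 + f 6 + f 7 + f 8 + f 9 + f 10 + f 11 + f 12 := by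
    intro f h0
    have h1 : ∑ a : (ZMod 13)ˣ, f a = ∑ a : ZMod 13, f a := by
      rw [← Finset.sum_subset (Finset.subset_univ {(0:ZMod 13)}ᶜ)]
      · exact (Finset.sum_bij (fun a _ => (a : ZMod 13)) (by intro a _; simp [a.ne_zero])
          (by intro a _ b _ h; exact Units.val_inj.mp h)
          (by intro b hb; simp at hb
              exact ⟨(Ne.isUnit hb).unit, Finset.mem_univ _, (Ne.isUnit hb).unit_spec⟩)
          (fun a _ => rfl))
      · intro x _ hx; simp at hx; rw [hx]; exact h0
    rw [h1, huniv13]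
    show List.sum _ = _
    simp only [List.map_cons, List.map_nil, List.sum_cons, List.sum_nil]
    rw [h0]; ring
  rw [hsum (fun x => (ε ^ 2) x * Complex.exp (2 * π * Complex.I * (x.val : ℂ) / 13))
        (by simp [MulChar.map_zero]),
      hsum (fun x => ε x * Complex.exp (2 * π * Complex.I * (x.val : ℂ) / 13))
        (by simp [MulChar.map_zero])]
  have hpow : ∀ a : ZMod 13, (ε ^ 2) a = (ε a)^2 := fun a => by
    simp [MulChar.pow_apply', sq]
  have hzk : ∀ k : ℕ, Complex.exp (2 * ↑π * Complex.I * (k:ℂ) / 13) = zz^k := by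
    intro k
    rw [zz, ← Complex.exp_nat_mul]
    congr 1
    ring
  have e1 : ε (1 : ZMod 13) = 1 := map_one ε
  have e2 : ε (2 : ZMod 13) = Complex.exp (2 * ↑π * Complex.I / 6) := hε
  have e3 : ε (3 : ZMod 13) = (Complex.exp (2 * ↑π * Complex.I / 6))^4 := by
    have h : (3:ZMod 13) = (2:ZMod 13)^(4:ℕ) := by rfl
    rw [h, map_pow, hε]
  have e4 : ε (4 : ZMod 13) = (Complex.exp (2 * ↑π * Complex.I / 6))^2 := by
    have h : (4:ZMod 13) = (2:ZMod 13)^(2:ℕ) := by rfl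
    rw [h, map_pow, hε]
  have e5 : ε (5 : ZMod 13) = (Complex.exp (2 * ↑π * Complex.I / 6))^9 := by
    have h : (5:ZMod 13) = (2:ZMod 13)^(9:ℕ) := by rfl
    rw [h, map_pow, hε]
  have e6 : ε (6 : ZMod 13) = (Complex.exp (2 * ↑π * Complex.I / 6))^5 := by
    have h : (6:ZMod 13) = (2:ZMod 13)^(5:ℕ) := by rfl
    rw [h, map_pow, hε]
  have e7 : ε (7 : ZMod 13) = (Complex.exp (2 * ↑π * Complex.I / 6))^11 := by
    have h : (7:ZMod 13) = (2:ZMod 13)^(11:ℕ) := by rfl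
    rw [h, map_pow, hε]
  have e8 : ε (8 : ZMod 13) = (Complex.exp (2 * ↑π * Complex.I / 6))^3 := by
    have h : (8:ZMod 13) = (2:ZMod 13)^(3:ℕ) := by rfl
    rw [h, map_pow, hε]
  have e9 : ε (9 : ZMod 13) = (Complex.exp (2 * ↑π * Complex.I / 6))^8 := by
    have h : (9:ZMod 13) = (2:ZMod 13)^(8:ℕ) := by rfl
    rw [h, map_pow, hε]
  have e10 : ε (10 : ZMod 13) = (Complex.exp (2 * ↑π * Complex.I / 6))^10 := by
    have h : (10:ZMod 13) = (2:ZMod 13)^(10:ℕ) := by rfl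
    rw [h, map_pow, hε]
  have e11 : ε (11 : ZMod 13) = (Complex.exp (2 * ↑π * Complex.I / 6))^7 := by
    have h : (11:ZMod 13) = (2:ZMod 13)^(7:ℕ) := by rfl
    rw [h, map_pow, hε]
  have e12 : ε (12 : ZMod 13) = (Complex.exp (2 * ↑π * Complex.I / 6))^6 := by
    have h : (12:ZMod 13) = (2:ZMod 13)^(6:ℕ) := by rfl
    rw [h, map_pow, hε]
  simp only [hpow]
  rw [show ZMod.val (1 : ZMod 13) = (1:ℕ) from rfl, hzk 1]
  rw [show ZMod.val (2 : ZMod 13) = (2:ℕ) from rfl, hzk 2]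
  rw [show ZMod.val (3 : ZMod 13) = (3:ℕ) from rfl, hzk 3]
  rw [show ZMod.val (4 : ZMod 13) = (4:ℕ) from rfl, hzk 4]
  rw [show ZMod.val (5 : ZMod 13) = (5:ℕ) from rfl, hzk 5]
  rw [show ZMod.val (6 : ZMod 13) = (6:ℕ) from rfl, hzk 6]
  rw [show ZMod.val (7 : ZMod 13) = (7:ℕ) from rfl, hzk 7]
  rw [show ZMod.val (8 : ZMod 13) = (8:ℕ) from rfl, hzk 8]
  rw [show ZMod.val (9 : ZMod 13) = (9:ℕ) from rfl, hzk 9]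
  rw [show ZMod.val (10 : ZMod 13) = (10:ℕ) from rfl, hzk 10]
  rw [show ZMod.val (11 : ZMod 13) = (11:ℕ) from rfl, hzk 11]
  rw [show ZMod.val (12 : ZMod 13) = (12:ℕ) from rfl, hzk 12]
  rw [e1, e2, e3, e4, e5, e6, e7, e8, e9, e10, e11, e12]
  rw [sqrt13]
  linear_combination ((1:ℂ)*zz^3 + (2:ℂ)*zz^4 + (1:ℂ)*zz^5 + (-2:ℂ)*zz^6 + (-1:ℂ)*zz^7 + (-4:ℂ)*zz^8 + (1:ℂ)*zz^9 + (2:ℂ)*zz^10 + (-2:ℂ)*zz^11 + (3:ℂ)*zz^12 + (3:ℂ)*zz^14 + (-2:ℂ)*zz^15 + (2:ℂ)*zz^16 + (1:ℂ)*zz^17 + (-4:ℂ)*zz^18 + (-1:ℂ)*zz^19 + (-2:ℂ)*zz^20 + (1:ℂ)*zz^21 + (2:ℂ)*zz^22 + (1:ℂ)*zz^23 + (-1:ℂ)*zz^24 + (2:ℂ)*(Complex.exp (2 * ↑π * Complex.I / 6))*zz^4 + (1:ℂ)*(Complex.exp (2 * ↑π * Complex.I / 6))*zz^5 + (1:ℂ)*(Complex.exp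 (2 * ↑π * Complex.I / 6))*zz^7 + (-3:ℂ)*(Complex.exp (2 * ↑π * Complex.I / 6))*zz^9 + (2:ℂ)*(Complex.exp (2 * ↑π * Complex.I / 6))*zz^11 + (-1:ℂ)*(Complex.exp (2 * ↑π * Complex.I / 6))*zz^12 + (-1:ℂ)*(Complex.exp (2 * ↑π * Complex.I / 6))*zz^14 + (2:ℂ)*(Complex.exp (2 * ↑π * Complex.I / 6))*zz^15 + (-3:ℂ)*(Complex.exp (2 * ↑π * Complex.I / 6))*zz^17 + (1:ℂ)*(Complex.exp (2 * ↑π * Complex.I / 6))*zz^19 + (1:ℂ)*(Complex.exp (2 * ↑π * Complex.I / 6))*zz^21 + (2:ℂ)*(Complex.exp (2 * ↑π * Complex.I / 6))*zz^22 + (-1:ℂ)*(Complex.exp (2 * ↑π * Complex.I / 6))*zz^23 + (-1:ℂ)*(Complex.exp (2 * ↑π * Complex.I / 6))*zz^24 + (1:ℂ)*(Complex.exp (2 * ↑π * Complex.I / 6))^2*zz^5 + (2:ℂ)*(Complex.exp (2 * ↑π * Complex.I / 6))^2*zz^6 + (2:ℂ)*(Complex.exp (2 * ↑π * Complex.I /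 6))^2*zz^7 + (4:ℂ)*(Complex.exp (2 * ↑π * Complex.I / 6))^2*zz^8 + (-4:ℂ)*(Complex.exp (2 * ↑π * Complex.I / 6))^2*zz^9 + (-2:ℂ)*(Complex.exp (2 * ↑π * Complex.I / 6))^2*zz^10 + (4:ℂ)*(Complex.exp (2 * ↑π * Complex.I / 6))^2*zz^11 + (-4:ℂ)*(Complex.exp (2 * ↑π * Complex.I / 6))^2*zz^12 + (-4:ℂ)*(Complex.exp (2 * ↑π * Complex.I / 6))^2*zz^14 + (4:ℂ)*(Complex.exp (2 * ↑π * Complex.I / 6))^2*zz^15 + (-2:ℂ)*(Complex.exp (2 * ↑π * Complex.I / 6))^2*zz^16 + (-4:ℂ)*(Complex.exp (2 * ↑π * Complex.I / 6))^2*zz^17 + (4:ℂ)*(Complex.exp (2 * ↑π * Complex.I / 6))^2*zz^18 + (2:ℂ)*(Complex.exp (2 * ↑π * Complex.I / 6))^2*zz^19 + (2:ℂ)*(Complex.exp (2 * ↑π * Complex.I / 6))^2*zz^20 + (-2:ℂ)*(Complex.exp (2 * ↑π * Complex.I / 6))^2*zz^23 + (-1:ℂ)*(Complex.exp (2 * ↑π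 * Complex.I / 6))^3*zz^4 + (2:ℂ)*(Complex.exp (2 * ↑π * Complex.I / 6))^3*zz^6 + (1:ℂ)*(Complex.exp (2 * ↑π * Complex.I / 6))^3*zz^7 + (4:ℂ)*(Complex.exp (2 * ↑π * Complex.I / 6))^3*zz^8 + (-2:ℂ)*(Complex.exp (2 * ↑π * Complex.I / 6))^3*zz^10 + (2:ℂ)*(Complex.exp (2 * ↑π * Complex.I / 6))^3*zz^11 + (-3:ℂ)*(Complex.exp (2 * ↑π * Complex.I / 6))^3*zz^12 + (-3:ℂ)*(Complex.exp (2 * ↑π * Complex.I / 6))^3*zz^14 + (2:ℂ)*(Complex.exp (2 * ↑π * Complex.I / 6))^3*zz^15 + (-2:ℂ)*(Complex.exp (2 * ↑π * Complex.I / 6))^3*zz^16 + (-1:ℂ)*(Complex.exp (2 * ↑π * Complex.I / 6))^3*zz^17 + (4:ℂ)*(Complex.exp (2 * ↑π * Complex.I / 6))^3*zz^18 + (1:ℂ)*(Complex.exp (2 * ↑π * Complex.I / 6))^3*zz^19 + (2:ℂ)*(Complex.exp (2 * ↑π * Complex.I / 6))^3*zz^20 + (-1:ℂ)*(Complex.exp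 (2 * ↑π * Complex.I / 6))^3*zz^21 + (-2:ℂ)*(Complex.exp (2 * ↑π * Complex.I / 6))^3*zz^22 + (-1:ℂ)*(Complex.exp (2 * ↑π * Complex.I / 6))^3*zz^23 + (1:ℂ)*(Complex.exp (2 * ↑π * Complex.I / 6))^3*zz^24 + (1:ℂ)*(Complex.exp (2 * ↑π * Complex.I / 6))^4*zz^6 + (-1:ℂ)*(Complex.exp (2 * ↑π * Complex.I / 6))^4*zz^7 + (4:ℂ)*(Complex.exp (2 * ↑π * Complex.I / 6))^4*zz^9 + (-2:ℂ)*(Complex.exp (2 * ↑π * Complex.I / 6))^4*zz^11 + (1:ℂ)*(Complex.exp (2 * ↑π * Complex.I / 6))^4*zz^12 + (1:ℂ)*(Complex.exp (2 * ↑π * Complex.I / 6))^4*zz^14 + (-2:ℂ)*(Complex.exp (2 * ↑π * Complex.I / 6))^4*zz^15 + (3:ℂ)*(Complex.exp (2 * ↑π * Complex.I / 6))^4*zz^17 + (-1:ℂ)*(Complex.exp (2 * ↑π * Complex.I / 6))^4*zz^19 + (-1:ℂ)*(Complex.exp (2 * ↑π * Complex.I / 6))^4*zz^21 + (-2:ℂ)*(Complex.exp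 (2 * ↑π * Complex.I / 6))^4*zz^22 + (1:ℂ)*(Complex.exp (2 * ↑π * Complex.I / 6))^4*zz^23 + (1:ℂ)*(Complex.exp (2 * ↑π * Complex.I / 6))^4*zz^24 + (1:ℂ)*(Complex.exp (2 * ↑π * Complex.I / 6))^5*zz^4 + (-1:ℂ)*(Complex.exp (2 * ↑π * Complex.I / 6))^5*zz^7 + (-4:ℂ)*(Complex.exp (2 * ↑π * Complex.I / 6))^5*zz^8 + (4:ℂ)*(Complex.exp (2 * ↑π * Complex.I / 6))^5*zz^9 + (3:ℂ)*(Complex.exp (2 * ↑π * Complex.I / 6))^5*zz^10 + (-4:ℂ)*(Complex.exp (2 * ↑π * Complex.I / 6))^5*zz^11 + (4:ℂ)*(Complex.exp (2 * ↑π * Complex.I / 6))^5*zz^12 + (4:ℂ)*(Complex.exp (2 * ↑π * Complex.I / 6))^5*zz^14 + (-4:ℂ)*(Complex.exp (2 * ↑π * Complex.I / 6))^5*zz^15 + (2:ℂ)*(Complex.exp (2 * ↑π * Complex.I / 6))^5*zz^16 + (4:ℂ)*(Complex.exp (2 * ↑π * Complex.I / 6))^5*zz^17 + (-4:ℂ)*(Complex.exp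 (2 * ↑π * Complex.I / 6))^5*zz^18 + (-2:ℂ)*(Complex.exp (2 * ↑π * Complex.I / 6))^5*zz^19 + (-2:ℂ)*(Complex.exp (2 * ↑π * Complex.I / 6))^5*zz^20 + (2:ℂ)*(Complex.exp (2 * ↑π * Complex.I / 6))^5*zz^23 + (1:ℂ)*(Complex.exp (2 * ↑π * Complex.I / 6))^6*zz^4 + (1:ℂ)*(Complex.exp (2 * ↑π * Complex.I / 6))^6*zz^5 + (-1:ℂ)*(Complex.exp (2 * ↑π * Complex.I / 6))^6*zz^6 + (-3:ℂ)*(Complex.exp (2 * ↑π * Complex.I / 6))^6*zz^8 + (1:ℂ)*(Complex.exp (2 * ↑π * Complex.I / 6))^6*zz^9 + (3:ℂ)*(Complex.exp (2 * ↑π * Complex.I / 6))^6*zz^10 + (-2:ℂ)*(Complex.exp (2 * ↑π * Complex.I / 6))^6*zz^11 + (3:ℂ)*(Complex.exp (2 * ↑π * Complex.I / 6))^6*zz^12 + (1:ℂ)*(Complex.exp (2 * ↑π * Complex.I / 6))^6*zz^13 + (3:ℂ)*(Complex.exp (2 * ↑π * Complex.I / 6))^6*zz^14 + (-2:ℂ)*(Complex.exp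 (2 * ↑π * Complex.I / 6))^6*zz^15 + (2:ℂ)*(Complex.exp (2 * ↑π * Complex.I / 6))^6*zz^16 + (1:ℂ)*(Complex.exp (2 * ↑π * Complex.I / 6))^6*zz^17 + (-4:ℂ)*(Complex.exp (2 * ↑π * Complex.I / 6))^6*zz^18 + (-1:ℂ)*(Complex.exp (2 * ↑π * Complex.I / 6))^6*zz^19 + (-2:ℂ)*(Complex.exp (2 * ↑π * Complex.I / 6))^6*zz^20 + (1:ℂ)*(Complex.exp (2 * ↑π * Complex.I / 6))^6*zz^21 + (2:ℂ)*(Complex.exp (2 * ↑π * Complex.I / 6))^6*zz^22 + (1:ℂ)*(Complex.exp (2 * ↑π * Complex.I / 6))^6*zz^23 + (-1:ℂ)*(Complex.exp (2 * ↑π * Complex.I / 6))^6*zz^24 + (1:ℂ)*(Complex.exp (2 * ↑π * Complex.I / 6))^7*zz^5 + (-1:ℂ)*(Complex.exp (2 * ↑π * Complex.I / 6))^7*zz^6 + (1:ℂ)*(Complex.exp (2 * ↑π * Complex.I / 6))^7*zz^7 + (2:ℂ)*(Complex.exp (2 * ↑π * Complex.I / 6))^7*zz^8 + (-3:ℂ)*(Complex.exp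 (2 * ↑π * Complex.I / 6))^7*zz^9 + (1:ℂ)*(Complex.exp (2 * ↑π * Complex.I / 6))^7*zz^10 + (2:ℂ)*(Complex.exp (2 * ↑π * Complex.I / 6))^7*zz^11 + (1:ℂ)*(Complex.exp (2 * ↑π * Complex.I / 6))^7*zz^12 + (1:ℂ)*(Complex.exp (2 * ↑π * Complex.I / 6))^7*zz^13 + (-1:ℂ)*(Complex.exp (2 * ↑π * Complex.I / 6))^7*zz^14 + (2:ℂ)*(Complex.exp (2 * ↑π * Complex.I / 6))^7*zz^15 + (-3:ℂ)*(Complex.exp (2 * ↑π * Complex.I / 6))^7*zz^17 + (1:ℂ)*(Complex.exp (2 * ↑π * Complex.I / 6))^7*zz^19 + (1:ℂ)*(Complex.exp (2 * ↑π * Complex.I / 6))^7*zz^21 + (2:ℂ)*(Complex.exp (2 * ↑π * Complex.I / 6))^7*zz^22 + (-1:ℂ)*(Complex.exp (2 * ↑π * Complex.I / 6))^7*zz^23 + (-1:ℂ)*(Complex.exp (2 * ↑π * Complex.I / 6))^7*zz^24 + (2:ℂ)*(Complex.exp (2 * ↑π * Complex.I / 6))^8*zz^7 + (5:ℂ)*(Complex.exp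 (2 * ↑π * Complex.I / 6))^8*zz^8 + (-4:ℂ)*(Complex.exp (2 * ↑π * Complex.I / 6))^8*zz^9 + (-1:ℂ)*(Complex.exp (2 * ↑π * Complex.I / 6))^8*zz^10 + (4:ℂ)*(Complex.exp (2 * ↑π * Complex.I / 6))^8*zz^11 + (-1:ℂ)*(Complex.exp (2 * ↑π * Complex.I / 6))^8*zz^12 + (-3:ℂ)*(Complex.exp (2 * ↑π * Complex.I / 6))^8*zz^14 + (4:ℂ)*(Complex.exp (2 * ↑π * Complex.I / 6))^8*zz^15 + (-2:ℂ)*(Complex.exp (2 * ↑π * Complex.I / 6))^8*zz^16 + (-4:ℂ)*(Complex.exp (2 * ↑π * Complex.I / 6))^8*zz^17 + (4:ℂ)*(Complex.exp (2 * ↑π * Complex.I / 6))^8*zz^18 + (2:ℂ)*(Complex.exp (2 * ↑π * Complex.I / 6))^8*zz^19 + (2:ℂ)*(Complex.exp (2 * ↑π * Complex.I / 6))^8*zz^20 + (-2:ℂ)*(Complex.exp (2 * ↑π * Complex.I / 6))^8*zz^23 + (2:ℂ)*(Complex.exp (2 * ↑π * Complex.I / 6))^9*zz^6 + (1:ℂ)*(Complex.exp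 (2 * ↑π * Complex.I / 6))^9*zz^7 + (3:ℂ)*(Complex.exp (2 * ↑π * Complex.I / 6))^9*zz^8 + (-1:ℂ)*(Complex.exp (2 * ↑π * Complex.I / 6))^9*zz^9 + (-1:ℂ)*(Complex.exp (2 * ↑π * Complex.I / 6))^9*zz^10 + (2:ℂ)*(Complex.exp (2 * ↑π * Complex.I / 6))^9*zz^11 + (-2:ℂ)*(Complex.exp (2 * ↑π * Complex.I / 6))^9*zz^12 + (-2:ℂ)*(Complex.exp (2 * ↑π * Complex.I / 6))^9*zz^14 + (2:ℂ)*(Complex.exp (2 * ↑π * Complex.I / 6))^9*zz^15 + (-1:ℂ)*(Complex.exp (2 * ↑π * Complex.I / 6))^9*zz^16 + (-1:ℂ)*(Complex.exp (2 * ↑π * Complex.I / 6))^9*zz^17 + (4:ℂ)*(Complex.exp (2 * ↑π * Complex.I / 6))^9*zz^18 + (1:ℂ)*(Complex.exp (2 * ↑π * Complex.I / 6))^9*zz^19 + (2:ℂ)*(Complex.exp (2 * ↑π * Complex.I / 6))^9*zz^20 + (-1:ℂ)*(Complex.exp (2 * ↑π * Complex.I / 6))^9*zz^21 + (-2:ℂ)*(Complex.exp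 (2 * ↑π * Complex.I / 6))^9*zz^22 + (-1:ℂ)*(Complex.exp (2 * ↑π * Complex.I / 6))^9*zz^23 + (1:ℂ)*(Complex.exp (2 * ↑π * Complex.I / 6))^9*zz^24 + (2:ℂ)*(Complex.exp (2 * ↑π * Complex.I / 6))^10*zz^6 + (1:ℂ)*(Complex.exp (2 * ↑π * Complex.I / 6))^10*zz^7 + (-2:ℂ)*(Complex.exp (2 * ↑π * Complex.I / 6))^10*zz^8 + (3:ℂ)*(Complex.exp (2 * ↑π * Complex.I / 6))^10*zz^9 + (1:ℂ)*(Complex.exp (2 * ↑π * Complex.I / 6))^10*zz^11 + (-1:ℂ)*(Complex.exp (2 * ↑π * Complex.I / 6))^10*zz^12 + (1:ℂ)*(Complex.exp (2 * ↑π * Complex.I / 6))^10*zz^14 + (-2:ℂ)*(Complex.exp (2 * ↑π * Complex.I / 6))^10*zz^15 + (2:ℂ)*(Complex.exp (2 * ↑π * Complex.I / 6))^10*zz^16 + (3:ℂ)*(Complex.exp (2 * ↑π * Complex.I / 6))^10*zz^17 + (-1:ℂ)*(Complex.exp (2 * ↑π * Complex.I / 6))^10*zz^19 + (-1:ℂ)*(Complex.exp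 (2 * ↑π * Complex.I / 6))^10*zz^21 + (-2:ℂ)*(Complex.exp (2 * ↑π * Complex.I / 6))^10*zz^22 + (1:ℂ)*(Complex.exp (2 * ↑π * Complex.I / 6))^10*zz^23 + (1:ℂ)*(Complex.exp (2 * ↑π * Complex.I / 6))^10*zz^24 + (1:ℂ)*(Complex.exp (2 * ↑π * Complex.I / 6))^11*zz^7 + (-3:ℂ)*(Complex.exp (2 * ↑π * Complex.I / 6))^11*zz^8 + (4:ℂ)*(Complex.exp (2 * ↑π * Complex.I / 6))^11*zz^9 + (1:ℂ)*(Complex.exp (2 * ↑π * Complex.I / 6))^11*zz^10 + (1:ℂ)*(Complex.exp (2 * ↑π * Complex.I / 6))^11*zz^12 + (4:ℂ)*(Complex.exp (2 * ↑π * Complex.I / 6))^11*zz^14 + (-3:ℂ)*(Complex.exp (2 * ↑π * Complex.I / 6))^11*zz^15 + (3:ℂ)*(Complex.exp (2 * ↑π * Complex.I / 6))^11*zz^16 + (4:ℂ)*(Complex.exp (2 * ↑π * Complex.I / 6))^11*zz^17 + (-4:ℂ)*(Complex.exp (2 * ↑π * Complex.I / 6))^11*zz^18 + (-2:ℂ)*(Complex.exp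 (2 * ↑π * Complex.I / 6))^11*zz^19 + (-2:ℂ)*(Complex.exp (2 * ↑π * Complex.I / 6))^11*zz^20 + (2:ℂ)*(Complex.exp (2 * ↑π * Complex.I / 6))^11*zz^23 + (-1:ℂ)*(Complex.exp (2 * ↑π * Complex.I / 6))^12*zz^6 + (-1:ℂ)*(Complex.exp (2 * ↑π * Complex.I / 6))^12*zz^8 + (1:ℂ)*(Complex.exp (2 * ↑π * Complex.I / 6))^12*zz^9 + (2:ℂ)*(Complex.exp (2 * ↑π * Complex.I / 6))^12*zz^10 + (-1:ℂ)*(Complex.exp (2 * ↑π * Complex.I / 6))^12*zz^11 + (3:ℂ)*(Complex.exp (2 * ↑π * Complex.I / 6))^12*zz^12 + (2:ℂ)*(Complex.exp (2 * ↑π * Complex.I / 6))^12*zz^13 + (3:ℂ)*(Complex.exp (2 * ↑π * Complex.I / 6))^12*zz^14 + (-1:ℂ)*(Complex.exp (2 * ↑π * Complex.I / 6))^12*zz^15 + (1:ℂ)*(Complex.exp (2 * ↑π * Complex.I / 6))^12*zz^16 + (1:ℂ)*(Complex.exp (2 * ↑π * Complex.I / 6))^12*zz^17 + (-4:ℂ)*(Complex.exp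 (2 * ↑π * Complex.I / 6))^12*zz^18 + (-1:ℂ)*(Complex.exp (2 * ↑π * Complex.I / 6))^12*zz^19 + (-1:ℂ)*(Complex.exp (2 * ↑π * Complex.I / 6))^12*zz^20 + (1:ℂ)*(Complex.exp (2 * ↑π * Complex.I / 6))^12*zz^21 + (2:ℂ)*(Complex.exp (2 * ↑π * Complex.I / 6))^12*zz^22 + (1:ℂ)*(Complex.exp (2 * ↑π * Complex.I / 6))^12*zz^23 + (-1:ℂ)*(Complex.exp (2 * ↑π * Complex.I / 6))^12*zz^24 + (-1:ℂ)*(Complex.exp (2 * ↑π * Complex.I / 6))^13*zz^6 + (-1:ℂ)*(Complex.exp (2 * ↑π * Complex.I / 6))^13*zz^7 + (2:ℂ)*(Complex.exp (2 * ↑π * Complex.I / 6))^13*zz^8 + (1:ℂ)*(Complex.exp (2 * ↑π * Complex.I / 6))^13*zz^10 + (-1:ℂ)*(Complex.exp (2 * ↑π * Complex.I / 6))^13*zz^11 + (2:ℂ)*(Complex.exp (2 * ↑π * Complex.I / 6))^13*zz^12 + (2:ℂ)*(Complex.exp (2 * ↑π * Complex.I / 6))^13*zz^13 + (1:ℂ)*(Complex.exp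 (2 * ↑π * Complex.I / 6))^13*zz^14 + (2:ℂ)*(Complex.exp (2 * ↑π * Complex.I / 6))^13*zz^15 + (-2:ℂ)*(Complex.exp (2 * ↑π * Complex.I / 6))^13*zz^16 + (-3:ℂ)*(Complex.exp (2 * ↑π * Complex.I / 6))^13*zz^17 + (2:ℂ)*(Complex.exp (2 * ↑π * Complex.I / 6))^13*zz^19 + (1:ℂ)*(Complex.exp (2 * ↑π * Complex.I / 6))^13*zz^20 + (1:ℂ)*(Complex.exp (2 * ↑π * Complex.I / 6))^13*zz^21 + (2:ℂ)*(Complex.exp (2 * ↑π * Complex.I / 6))^13*zz^22 + (-1:ℂ)*(Complex.exp (2 * ↑π * Complex.I / 6))^13*zz^23 + (-1:ℂ)*(Complex.exp (2 * ↑π * Complex.I / 6))^13*zz^24 + (-1:ℂ)*(Complex.exp (2 * ↑π * Complex.I / 6))^14*zz^7 + (3:ℂ)*(Complex.exp (2 * ↑π * Complex.I / 6))^14*zz^8 + (-1:ℂ)*(Complex.exp (2 * ↑π * Complex.I / 6))^14*zz^10 + (-1:ℂ)*(Complex.exp (2 * ↑π * Complex.I / 6))^14*zz^14 + (4:ℂ)*(Complex.exp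 (2 * ↑π * Complex.I / 6))^14*zz^15 + (-2:ℂ)*(Complex.exp (2 * ↑π * Complex.I / 6))^14*zz^16 + (-3:ℂ)*(Complex.exp (2 * ↑π * Complex.I / 6))^14*zz^17 + (4:ℂ)*(Complex.exp (2 * ↑π * Complex.I / 6))^14*zz^18 + (3:ℂ)*(Complex.exp (2 * ↑π * Complex.I / 6))^14*zz^19 + (2:ℂ)*(Complex.exp (2 * ↑π * Complex.I / 6))^14*zz^20 + (-2:ℂ)*(Complex.exp (2 * ↑π * Complex.I / 6))^14*zz^23 + (1:ℂ)*(Complex.exp (2 * ↑π * Complex.I / 6))^15*zz^6 + (1:ℂ)*(Complex.exp (2 * ↑π * Complex.I / 6))^15*zz^8 + (-2:ℂ)*(Complex.exp (2 * ↑π * Complex.I / 6))^15*zz^10 + (2:ℂ)*(Complex.exp (2 * ↑π * Complex.I / 6))^15*zz^11 + (-1:ℂ)*(Complex.exp (2 * ↑π * Complex.I / 6))^15*zz^12 + (-1:ℂ)*(Complex.exp (2 * ↑π * Complex.I / 6))^15*zz^14 + (2:ℂ)*(Complex.exp (2 * ↑π * Complex.I / 6))^15*zz^15 + (4:ℂ)*(Complex.exp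 (2 * ↑π * Complex.I / 6))^15*zz^18 + (1:ℂ)*(Complex.exp (2 * ↑π * Complex.I / 6))^15*zz^19 + (2:ℂ)*(Complex.exp (2 * ↑π * Complex.I / 6))^15*zz^20 + (-1:ℂ)*(Complex.exp (2 * ↑π * Complex.I / 6))^15*zz^21 + (-2:ℂ)*(Complex.exp (2 * ↑π * Complex.I / 6))^15*zz^22 + (-1:ℂ)*(Complex.exp (2 * ↑π * Complex.I / 6))^15*zz^23 + (1:ℂ)*(Complex.exp (2 * ↑π * Complex.I / 6))^15*zz^24 + (1:ℂ)*(Complex.exp (2 * ↑π * Complex.I / 6))^16*zz^6 + (1:ℂ)*(Complex.exp (2 * ↑π * Complex.I / 6))^16*zz^7 + (-2:ℂ)*(Complex.exp (2 * ↑π * Complex.I / 6))^16*zz^8 + (2:ℂ)*(Complex.exp (2 * ↑π * Complex.I / 6))^16*zz^11 + (2:ℂ)*(Complex.exp (2 * ↑π * Complex.I / 6))^16*zz^16 + (3:ℂ)*(Complex.exp (2 * ↑π * Complex.I / 6))^16*zz^17 + (2:ℂ)*(Complex.exp (2 * ↑π * Complex.I / 6))^16*zz^18 + (-2:ℂ)*(Complex.exp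 (2 * ↑π * Complex.I / 6))^16*zz^19 + (-1:ℂ)*(Complex.exp (2 * ↑π * Complex.I / 6))^16*zz^21 + (-2:ℂ)*(Complex.exp (2 * ↑π * Complex.I / 6))^16*zz^22 + (1:ℂ)*(Complex.exp (2 * ↑π * Complex.I / 6))^16*zz^23 + (1:ℂ)*(Complex.exp (2 * ↑π * Complex.I / 6))^16*zz^24 + (1:ℂ)*(Complex.exp (2 * ↑π * Complex.I / 6))^17*zz^7 + (-2:ℂ)*(Complex.exp (2 * ↑π * Complex.I / 6))^17*zz^8 + (2:ℂ)*(Complex.exp (2 * ↑π * Complex.I / 6))^17*zz^10 + (1:ℂ)*(Complex.exp (2 * ↑π * Complex.I / 6))^17*zz^11 + (1:ℂ)*(Complex.exp (2 * ↑π * Complex.I / 6))^17*zz^12 + (1:ℂ)*(Complex.exp (2 * ↑π * Complex.I / 6))^17*zz^14 + (-1:ℂ)*(Complex.exp (2 * ↑π * Complex.I / 6))^17*zz^15 + (2:ℂ)*(Complex.exp (2 * ↑π * Complex.I / 6))^17*zz^16 + (4:ℂ)*(Complex.exp (2 * ↑π * Complex.I / 6))^17*zz^17 + (-1:ℂ)*(Complex.exp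 (2 * ↑π * Complex.I / 6))^17*zz^18 + (-2:ℂ)*(Complex.exp (2 * ↑π * Complex.I / 6))^17*zz^19 + (-2:ℂ)*(Complex.exp (2 * ↑π * Complex.I / 6))^17*zz^20 + (2:ℂ)*(Complex.exp (2 * ↑π * Complex.I / 6))^17*zz^23 + (2:ℂ)*(Complex.exp (2 * ↑π * Complex.I / 6))^18*zz^10 + (-1:ℂ)*(Complex.exp (2 * ↑π * Complex.I / 6))^18*zz^11 + (1:ℂ)*(Complex.exp (2 * ↑π * Complex.I / 6))^18*zz^12 + (2:ℂ)*(Complex.exp (2 * ↑π * Complex.I / 6))^18*zz^13 + (2:ℂ)*(Complex.exp (2 * ↑π * Complex.I / 6))^18*zz^14 + (1:ℂ)*(Complex.exp (2 * ↑π * Complex.I / 6))^18*zz^17 + (-3:ℂ)*(Complex.exp (2 * ↑π * Complex.I / 6))^18*zz^18 + (-2:ℂ)*(Complex.exp (2 * ↑π * Complex.I / 6))^18*zz^20 + (1:ℂ)*(Complex.exp (2 * ↑π * Complex.I / 6))^18*zz^21 + (2:ℂ)*(Complex.exp (2 * ↑π * Complex.I / 6))^18*zz^22 + (1:ℂ)*(Complex.exp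 (2 * ↑π * Complex.I / 6))^18*zz^23 + (2:ℂ)*(Complex.exp (2 * ↑π * Complex.I / 6))^19*zz^8 + (1:ℂ)*(Complex.exp (2 * ↑π * Complex.I / 6))^19*zz^10 + (-1:ℂ)*(Complex.exp (2 * ↑π * Complex.I / 6))^19*zz^11 + (2:ℂ)*(Complex.exp (2 * ↑π * Complex.I / 6))^19*zz^13 + (1:ℂ)*(Complex.exp (2 * ↑π * Complex.I / 6))^19*zz^14 + (1:ℂ)*(Complex.exp (2 * ↑π * Complex.I / 6))^19*zz^15 + (-2:ℂ)*(Complex.exp (2 * ↑π * Complex.I / 6))^19*zz^16 + (-1:ℂ)*(Complex.exp (2 * ↑π * Complex.I / 6))^19*zz^17 + (-2:ℂ)*(Complex.exp (2 * ↑π * Complex.I / 6))^19*zz^18 + (2:ℂ)*(Complex.exp (2 * ↑π * Complex.I / 6))^19*zz^19 + (1:ℂ)*(Complex.exp (2 * ↑π * Complex.I / 6))^19*zz^21 + (2:ℂ)*(Complex.exp (2 * ↑π * Complex.I / 6))^19*zz^22 + (2:ℂ)*(Complex.exp (2 * ↑π * Complex.I / 6))^20*zz^8 + (1:ℂ)*(Complex.exp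 (2 * ↑π * Complex.I / 6))^20*zz^9 + (-1:ℂ)*(Complex.exp (2 * ↑π * Complex.I / 6))^20*zz^10 + (1:ℂ)*(Complex.exp (2 * ↑π * Complex.I / 6))^20*zz^11 + (-1:ℂ)*(Complex.exp (2 * ↑π * Complex.I / 6))^20*zz^14 + (1:ℂ)*(Complex.exp (2 * ↑π * Complex.I / 6))^20*zz^15 + (-1:ℂ)*(Complex.exp (2 * ↑π * Complex.I / 6))^20*zz^16 + (-2:ℂ)*(Complex.exp (2 * ↑π * Complex.I / 6))^20*zz^17 + (1:ℂ)*(Complex.exp (2 * ↑π * Complex.I / 6))^20*zz^18 + (2:ℂ)*(Complex.exp (2 * ↑π * Complex.I / 6))^20*zz^19 + (2:ℂ)*(Complex.exp (2 * ↑π * Complex.I / 6))^20*zz^20 + (1:ℂ)*(Complex.exp (2 * ↑π * Complex.I / 6))^20*zz^21 + (1:ℂ)*(Complex.exp (2 * ↑π * Complex.I / 6))^21*zz^9 + (-2:ℂ)*(Complex.exp (2 * ↑π * Complex.I / 6))^21*zz^10 + (2:ℂ)*(Complex.exp (2 * ↑π * Complex.I / 6))^21*zz^11 + (1:ℂ)*(Complex.exp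 (2 * ↑π * Complex.I / 6))^21*zz^12 + (-2:ℂ)*(Complex.exp (2 * ↑π * Complex.I / 6))^21*zz^14 + (1:ℂ)*(Complex.exp (2 * ↑π * Complex.I / 6))^21*zz^15 + (1:ℂ)*(Complex.exp (2 * ↑π * Complex.I / 6))^21*zz^16 + (3:ℂ)*(Complex.exp (2 * ↑π * Complex.I / 6))^21*zz^18 + (2:ℂ)*(Complex.exp (2 * ↑π * Complex.I / 6))^21*zz^20 + (-1:ℂ)*(Complex.exp (2 * ↑π * Complex.I / 6))^21*zz^22 + (-1:ℂ)*(Complex.exp (2 * ↑π * Complex.I / 6))^22*zz^10 + (1:ℂ)*(Complex.exp (2 * ↑π * Complex.I / 6))^22*zz^11 + (1:ℂ)*(Complex.exp (2 * ↑π * Complex.I / 6))^22*zz^12 + (2:ℂ)*(Complex.exp (2 * ↑π * Complex.I / 6))^22*zz^16 + (2:ℂ)*(Complex.exp (2 * ↑π * Complex.I / 6))^22*zz^17 + (2:ℂ)*(Complex.exp (2 * ↑π * Complex.I / 6))^22*zz^18 + (-2:ℂ)*(Complex.exp (2 * ↑π * Complex.I / 6))^22*zz^19 + (1:ℂ)*(Complex.exp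 (2 * ↑π * Complex.I / 6))^22*zz^20 + (1:ℂ)*(Complex.exp (2 * ↑π * Complex.I / 6))^23*zz^10 + (2:ℂ)*(Complex.exp (2 * ↑π * Complex.I / 6))^23*zz^14 + (-1:ℂ)*(Complex.exp (2 * ↑π * Complex.I / 6))^23*zz^15 + (2:ℂ)*(Complex.exp (2 * ↑π * Complex.I / 6))^23*zz^16 + (2:ℂ)*(Complex.exp (2 * ↑π * Complex.I / 6))^23*zz^17 + (-1:ℂ)*(Complex.exp (2 * ↑π * Complex.I / 6))^23*zz^19 + (1:ℂ)*(Complex.exp (2 * ↑π * Complex.I / 6))^23*zz^22 + (2:ℂ)*(Complex.exp (2 * ↑π * Complex.I / 6))^24*zz^10 + (-1:ℂ)*(Complex.exp (2 * ↑π * Complex.I / 6))^24*zz^12 + (1:ℂ)*(Complex.exp (2 * ↑π * Complex.I / 6))^24*zz^13 + (2:ℂ)*(Complex.exp (2 * ↑π * Complex.I / 6))^24*zz^14 + (-1:ℂ)*(Complex.exp (2 * ↑π * Complex.I / 6))^24*zz^15 + (1:ℂ)*(Complex.exp (2 * ↑π * Complex.I / 6))^24*zz^17 + (-1:ℂ)*(Complex.exp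 (2 * ↑π * Complex.I / 6))^24*zz^18 + (1:ℂ)*(Complex.exp (2 * ↑π * Complex.I / 6))^24*zz^19 + (-1:ℂ)*(Complex.exp (2 * ↑π * Complex.I / 6))^24*zz^20 + (1:ℂ)*(Complex.exp (2 * ↑π * Complex.I / 6))^24*zz^21 + (1:ℂ)*(Complex.exp (2 * ↑π * Complex.I / 6))^24*zz^22 + (1:ℂ)*(Complex.exp (2 * ↑π * Complex.I / 6))^25*zz^10 + (-1:ℂ)*(Complex.exp (2 * ↑π * Complex.I / 6))^25*zz^12 + (1:ℂ)*(Complex.exp (2 * ↑π * Complex.I / 6))^25*zz^13 + (1:ℂ)*(Complex.exp (2 * ↑π * Complex.I / 6))^25*zz^14 + (1:ℂ)*(Complex.exp (2 * ↑π * Complex.I / 6))^25*zz^15 + (-1:ℂ)*(Complex.exp (2 * ↑π * Complex.I / 6))^25*zz^17 + (2:ℂ)*(Complex.exp (2 * ↑π * Complex.I / 6))^25*zz^19 + (-1:ℂ)*(Complex.exp (2 * ↑π * Complex.I / 6))^25*zz^20 + (1:ℂ)*(Complex.exp (2 * ↑π * Complex.I / 6))^25*zz^21 + (2:ℂ)*(Complex.exp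 (2 * ↑π * Complex.I / 6))^26*zz^15 + (-2:ℂ)*(Complex.exp (2 * ↑π * Complex.I / 6))^26*zz^17 + (1:ℂ)*(Complex.exp (2 * ↑π * Complex.I / 6))^26*zz^18 + (2:ℂ)*(Complex.exp (2 * ↑π * Complex.I / 6))^26*zz^19 + (1:ℂ)*(Complex.exp (2 * ↑π * Complex.I / 6))^27*zz^12 + (-1:ℂ)*(Complex.exp (2 * ↑π * Complex.I / 6))^27*zz^14 + (1:ℂ)*(Complex.exp (2 * ↑π * Complex.I / 6))^27*zz^15 + (1:ℂ)*(Complex.exp (2 * ↑π * Complex.I / 6))^27*zz^16 + (-1:ℂ)*(Complex.exp (2 * ↑π * Complex.I / 6))^27*zz^17 + (1:ℂ)*(Complex.exp (2 * ↑π * Complex.I / 6))^27*zz^18 + (1:ℂ)*(Complex.exp (2 * ↑π * Complex.I / 6))^27*zz^20 + (1:ℂ)*(Complex.exp (2 * ↑π * Complex.I / 6))^28*zz^12 + (-1:ℂ)*(Complex.exp (2 * ↑π * Complex.I / 6))^28*zz^14 + (1:ℂ)*(Complex.exp (2 * ↑π * Complex.I / 6))^28*zz^16 + (1:ℂ)*(Complex.exp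 (2 * ↑π * Complex.I / 6))^28*zz^17 + (1:ℂ)*(Complex.exp (2 * ↑π * Complex.I / 6))^28*zz^20 + (1:ℂ)*(Complex.exp (2 * ↑π * Complex.I / 6))^29*zz^12 + (2:ℂ)*(Complex.exp (2 * ↑π * Complex.I / 6))^29*zz^17 + (1:ℂ)*(Complex.exp (2 * ↑π * Complex.I / 6))^30*zz^14 + (1:ℂ)*(Complex.exp (2 * ↑π * Complex.I / 6))^30*zz^17 + (1:ℂ)*(Complex.exp (2 * ↑π * Complex.I / 6))^31*zz^14) * wrel + ((-3:ℂ)*zz + (2:ℂ)*zz^2 + (-2:ℂ)*zz^3 + (-1:ℂ)*zz^4 + (4:ℂ)*zz^5 + (1:ℂ)*zz^6 + (2:ℂ)*zz^7 + (-1:ℂ)*zz^8 + (-2:ℂ)*zz^9 + (-1:ℂ)*zz^10 + (1:ℂ)*zz^11 + (4:ℂ)*(Complex.exp (2 * ↑π * Complex.I / 6))*zz + (-4:ℂ)*(Complex.exp (2 * ↑π * Complex.I / 6))*zz^2 + (2:ℂ)*(Complex.exp (2 * ↑π * Complex.I / 6))*zz^3 + (4:ℂ)*(Complex.exp (2 *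 ↑π * Complex.I / 6))*zz^4 + (-4:ℂ)*(Complex.exp (2 * ↑π * Complex.I / 6))*zz^5 + (-2:ℂ)*(Complex.exp (2 * ↑π * Complex.I / 6))*zz^6 + (-2:ℂ)*(Complex.exp (2 * ↑π * Complex.I / 6))*zz^7 + (2:ℂ)*(Complex.exp (2 * ↑π * Complex.I / 6))*zz^10) * z13
end

section
/- The polynomial P₁₆ = y − x − xy − xy² + x²y + xy³ vanishes on the torus {|x|=|y|=1} exactly at the four points (1,1), (1,i), (1,−i), (−1,−1). -/
/-- The polynomial `P₁₆ = y - x - xy - xy² + x²y + xy³` vanishes on the torus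
`{|x|=|y|=1}` exactly at the four points `(1,1)`, `(1,i)`, `(1,-i)`, `(-1,-1)`. -/
theorem stmt_14 (x y : ℂ) :
    (‖x‖ = 1 ∧ ‖y‖ = 1 ∧
        y - x - x * y - x * y ^ 2 + x ^ 2 * y + x * y ^ 3 = 0) ↔
      ((x, y) = (1, 1) ∨ (x, y) = (1, Complex.I) ∨
        (x, y) = (1, -Complex.I) ∨ (x, y) = (-1, -1)) := by
  constructor
  · rintro ⟨hax, hay, hP⟩
    set cx := (starRingEnd ℂ) x with hcx
    set cy := (starRingEnd ℂ) y with hcy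
    have hx1 : x * cx = 1 := by
      rw [hcx, Complex.mul_conj]
      norm_cast
      rw [Complex.normSq_eq_norm_sq, hax]; norm_num
    have hy1 : y * cy = 1 := by
      rw [hcy, Complex.mul_conj]
      norm_cast
      rw [Complex.normSq_eq_norm_sq, hay]; norm_num
    have hc := congrArg (starRingEnd ℂ) hP
    simp only [map_sub, map_add, map_mul, map_pow, map_zero, ← hcx, ← hcy] at hc
    have hx0 : x ≠ 0 := by
      intro h; rw [h] at hax; simp at hax
    have key : x * (y ^ 4 - 1) = 0 := by
      linear_combination y * hP - x ^ 2 * y ^ 3 * hc +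
        (-x * y ^ 3 - x * y ^ 3 * cy - x * y * (y * cy) ^ 2 +
          y ^ 2 * (x * cx + 1) * (y * cy) + x * (y * cy) ^ 3) * hx1 +
        (x ^ 2 * y ^ 2 - x * y ^ 2 - x * y * (y * cy + 1) + y ^ 2 +
          x * ((y * cy) ^ 2 + y * cy + 1)) * hy1
    have hy4 : y ^ 4 - 1 = 0 := by
      rcases mul_eq_zero.mp key with h | h
      · exact absurd h hx0
      · exact h
    have hfac : (y - 1) * (y + 1) * (y - Complex.I) * (y + Complex.I) = 0 := by
      linear_combination hy4 - (y ^ 2 - 1) * Complex.I_sq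
    rcases mul_eq_zero.mp hfac with h | h
    · rcases mul_eq_zero.mp h with h | h
      · rcases mul_eq_zero.mp h with h | h
        · -- y = 1
          have hy : y = 1 := sub_eq_zero.mp h
          subst hy
          have h2 : (x - 1) ^ 2 = 0 := by linear_combination hP
          have hx : x = 1 := sub_eq_zero.mp (sq_eq_zero_iff.mp h2)
          exact Or.inl (by rw [hx])
        · -- y = -1
          have hy : y = -1 := eq_neg_of_add_eq_zero_left h
          subst hy
          have h2 : (x + 1) ^ 2 = 0 := by linear_combination -hP
          have hx : x = -1 := eq_neg_of_add_eq_zero_left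
            (sq_eq_zero_iff.mp h2)
          exact Or.inr (Or.inr (Or.inr (by rw [hx])))
      · -- y = I
        have hy : y = Complex.I := sub_eq_zero.mp h
        subst hy
        have h2 : Complex.I * (x - 1) ^ 2 = 0 := by
          linear_combination hP + x * (1 - Complex.I) * Complex.I_sq
        have h3 : (x - 1) ^ 2 = 0 := by
          rcases mul_eq_zero.mp h2 with h' | h'
          · exact absurd h' Complex.I_ne_zero
          · exact h'
        have hx : x = 1 := sub_eq_zero.mp (sq_eq_zero_iff.mp h3)
        exact Or.inr (Or.inl (by rw [hx]))
    · -- y = -I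
      have hy : y = -Complex.I := eq_neg_of_add_eq_zero_left h
      subst hy
      have h2 : Complex.I * (x - 1) ^ 2 = 0 := by
        linear_combination -hP - x * (1 + Complex.I) * Complex.I_sq
      have h3 : (x - 1) ^ 2 = 0 := by
        rcases mul_eq_zero.mp h2 with h' | h'
        · exact absurd h' Complex.I_ne_zero
        · exact h'
      have hx : x = 1 := sub_eq_zero.mp (sq_eq_zero_iff.mp h3)
      exact Or.inr (Or.inr (Or.inl (by rw [hx])))
  · rintro (h | h | h | h) <;>
      simp only [Prod.mk.injEq] at h <;> obtain ⟨rfl, rfl⟩ := h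
    · exact ⟨by simp, by simp, by ring⟩
    · exact ⟨by simp, by simp [Complex.norm_I],
        by linear_combination (Complex.I - 1) * Complex.I_sq⟩
    · exact ⟨by simp, by simp [Complex.norm_I],
        by linear_combination -(Complex.I + 1) * Complex.I_sq⟩
    · exact ⟨by simp, by simp, by ring⟩
end

section
/- The polynomial P₁₈ = −x² + y³ + xy² − x²y + x²y² − x³y² vanishes on the torus {|x|=|y|=1} exactly at the points (1,1), (1,−1), (−1,1), (−1,−1), (ζ₆², ζ₆), and (ζ̄₆², ζ̄₆), where ζ₆ = e^{2πi/6}. -/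
open scoped Real

section Aux

private lemma e_explicit :
    Complex.exp (2 * π * Complex.I / 6) = 1/2 + (Real.sqrt 3 : ℂ)/2 * Complex.I := by
  have h1 : (2 * π * Complex.I / 6 : ℂ) = ((π/3 : ℝ) : ℂ) * Complex.I := by
    push_cast; ring
  rw [h1, Complex.exp_mul_I]
  rw [← Complex.ofReal_cos, ← Complex.ofReal_sin, Real.cos_pi_div_three,
    Real.sin_pi_div_three]
  push_cast; ring

private lemma sqrt3_sq : ((Real.sqrt 3 : ℝ) : ℂ) ^ 2 = 3 := by
  have h : (Real.sqrt 3) ^ 2 = 3 := Real.sq_sqrt (by norm_num)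
  calc ((Real.sqrt 3 : ℝ) : ℂ) ^ 2 = ((Real.sqrt 3 ^ 2 : ℝ) : ℂ) := by push_cast; ring
  _ = 3 := by rw [h]; norm_num

private lemma ec_explicit :
    (starRingEnd ℂ) (Complex.exp (2 * π * Complex.I / 6)) = 1/2 - (Real.sqrt 3 : ℂ)/2 * Complex.I := by
  rw [e_explicit]
  simp only [map_add, map_mul, map_div₀, Complex.conj_I, Complex.conj_ofReal,
    map_one, map_ofNat]
  ring

private lemma e_sq : Complex.exp (2 * π * Complex.I / 6) ^ 2 - Complex.exp (2 * π * Complex.I / 6) + 1 = 0 := by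
  rw [e_explicit]
  linear_combination (Complex.I^2/4) * sqrt3_sq + (3/4 : ℂ) * Complex.I_sq

private lemma ec_sq : (starRingEnd ℂ) (Complex.exp (2 * π * Complex.I / 6)) ^ 2 - (starRingEnd ℂ) (Complex.exp (2 * π * Complex.I / 6)) + 1 = 0 := by
  rw [ec_explicit]
  linear_combination (Complex.I^2/4) * sqrt3_sq + (3/4 : ℂ) * Complex.I_sq

private lemma e_abs : ‖Complex.exp (2 * π * Complex.I / 6)‖ = 1 := by
  have h1 : (2 * π * Complex.I / 6 : ℂ) = ((π/3 : ℝ) : ℂ) * Complex.I := by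
    push_cast; ring
  rw [h1, Complex.norm_exp_ofReal_mul_I]

private lemma e_sum : Complex.exp (2 * π * Complex.I / 6) +
    (starRingEnd ℂ) (Complex.exp (2 * π * Complex.I / 6)) = 1 := by
  rw [ec_explicit, e_explicit]; ring

private lemma e_prod : Complex.exp (2 * π * Complex.I / 6) *
    (starRingEnd ℂ) (Complex.exp (2 * π * Complex.I / 6)) = 1 := by
  rw [ec_explicit, e_explicit]
  linear_combination (-Complex.I^2/4) * sqrt3_sq - (3/4 : ℂ) * Complex.I_sq

end Aux

/-- The polynomial `P₁₈ = -x² + y³ + xy² - x²y + x²y² - x³y²` vanishes on the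
torus `{|x|=|y|=1}` exactly at the points `(1,±1)`, `(-1,±1)`, `(ζ₆²,ζ₆)` and
`(ζ̄₆²,ζ̄₆)`, where `ζ₆ = e^{2πi/6}`. -/
theorem stmt_15 (x y : ℂ) :
    (‖x‖ = 1 ∧ ‖y‖ = 1 ∧
        -x ^ 2 + y ^ 3 + x * y ^ 2 - x ^ 2 * y + x ^ 2 * y ^ 2 - x ^ 3 * y ^ 2 = 0) ↔
      ((x, y) = (1, 1) ∨ (x, y) = (1, -1) ∨ (x, y) = (-1, 1) ∨ (x, y) = (-1, -1) ∨
        (x, y) = (Complex.exp (2 * π * Complex.I / 6) ^ 2,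
          Complex.exp (2 * π * Complex.I / 6)) ∨
        (x, y) = ((starRingEnd ℂ) (Complex.exp (2 * π * Complex.I / 6)) ^ 2,
          (starRingEnd ℂ) (Complex.exp (2 * π * Complex.I / 6)))) := by
  set e := Complex.exp (2 * π * Complex.I / 6) with he
  have hesq : e ^ 2 - e + 1 = 0 := e_sq
  have hecsq : ((starRingEnd ℂ) e) ^ 2 - (starRingEnd ℂ) e + 1 = 0 := ec_sq
  have heabs : ‖e‖ = 1 := e_abs
  have hesum : e + (starRingEnd ℂ) e = 1 := e_sum
  have heprod : e * (starRingEnd ℂ) e = 1 := e_prod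
  constructor
  · rintro ⟨hx, hy, hP⟩
    have hx0 : x ≠ 0 := by
      intro h; rw [h] at hx; simp at hx
    have hy0 : y ≠ 0 := by
      intro h; rw [h] at hy; simp at hy
    have hu : x * (starRingEnd ℂ) x = 1 := by
      rw [Complex.mul_conj, Complex.normSq_eq_norm_sq, hx]; norm_num
    have hv : y * (starRingEnd ℂ) y = 1 := by
      rw [Complex.mul_conj, Complex.normSq_eq_norm_sq, hy]; norm_num
    set a := (starRingEnd ℂ) x with ha
    set b := (starRingEnd ℂ) y with hb
    have hPc : -a ^ 2 + b ^ 3 + a * b ^ 2 - a ^ 2 * b + a ^ 2 * b ^ 2 - a ^ 3 * b ^ 2 = 0 := by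
      have := congrArg (starRingEnd ℂ) hP
      simpa [map_add, map_sub, map_mul, map_pow, map_neg, ha, hb] using this
    -- the conjugate-reflected polynomial Q
    have hQ : x^3 + x^2*y - x*y^3 - x*y^2 + x*y - y = 0 := by
      linear_combination (x^3*y^3) * hPc +
        (y^3*b^2 + x*y^3 + x*y^3*b + (-1)*x*y^3*b^2 + x*y^3*a*b^2 + (-1)*x^2*y^3*b^2 + x^2*y^3*a + x^2*y^3*a*b + (-1)*x^2*y^3*a*b^2 + x^2*y^3*a^2*b^2) * hu +
        (y + y^2*b + (-1)*x*y + x*y^2 + (-1)*x*y^2*b + (-1)*x^2*y + (-1)*x^2*y^2*b + (-1)*x^3 + (-1)*x^3*y*b + (-1)*x^3*y^2*b^2) * hv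
    -- the resultant identity
    have hR : y^2 * ((y-1)^4 * ((y+1)^8 * (y^2 - y + 1))) = 0 := by
      linear_combination
        ((-2)*y^2 + (-3)*y^3 + 4*y^4 + 5*y^5 + (-5)*y^6 + 9*y^8 + (-2)*y^9 + (-9)*y^10 + (-1)*y^11 + 3*y^12 + y^13 + (-1)*x^1*y^1 + (-3)*x^1*y^2 + 7*x^1*y^4 + 3*x^1*y^5 + (-7)*x^1*y^6 + (-3)*x^1*y^7 + 5*x^1*y^8 + 2*x^1*y^9 + (-2)*x^1*y^10 + (-1)*x^1*y^11 + (-1)*x^2*y^1 + (-1)*x^2*y^2 + 3*x^2*y^3 + 2*x^2*y^4 + (-5)*x^2*y^5 + (-2)*x^2*y^6 + 5*x^2*y^7 + 2*x^2*y^8 + (-2)*x^2*y^9 + (-1)*x^2*y^10) * hP +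
        ((-1)*y^1 + (-3)*y^2 + y^3 + 8*y^4 + (-9)*y^6 + 2*y^7 + 7*y^8 + (-3)*y^9 + (-4)*y^10 + y^11 + y^12 + (-1)*x^1*y^1 + (-2)*x^1*y^2 + 2*x^1*y^3 + 4*x^1*y^4 + (-5)*x^1*y^5 + (-5)*x^1*y^6 + 9*x^1*y^7 + 7*x^1*y^8 + (-6)*x^1*y^9 + (-5)*x^1*y^10 + x^1*y^11 + x^1*y^12 + (-1)*x^2*y^3 + (-1)*x^2*y^4 + 3*x^2*y^5 + 2*x^2*y^6 + (-5)*x^2*y^7 + (-2)*x^2*y^8 + 5*x^2*y^9 + 2*x^2*y^10 + (-2)*x^2*y^11 + (-1)*x^2*y^12) * hQ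
    rcases mul_eq_zero.mp hR with h | h
    · exact absurd ((pow_eq_zero_iff (by norm_num : (2:ℕ) ≠ 0)).mp h) hy0
    rcases mul_eq_zero.mp h with h | h
    · -- y = 1
      have hy1 : y = 1 := sub_eq_zero.mp ((pow_eq_zero_iff (by norm_num : (4:ℕ) ≠ 0)).mp h)
      subst hy1
      have hfac : (x - 1) * (x + 1)^2 = 0 := by linear_combination -hP
      rcases mul_eq_zero.mp hfac with h1 | h1
      · left; rw [sub_eq_zero.mp h1]
      · right; right; left
        have hx1 : x = -1 := eq_neg_of_add_eq_zero_left
          ((pow_eq_zero_iff (by norm_num : (2:ℕ) ≠ 0)).mp h1)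
        rw [hx1]
    rcases mul_eq_zero.mp h with h | hyy
    · -- y = -1
      have hy1 : y = -1 := eq_neg_of_add_eq_zero_left
        ((pow_eq_zero_iff (by norm_num : (8:ℕ) ≠ 0)).mp h)
      subst hy1
      have hfac : (x - 1)^2 * (x + 1) = 0 := by linear_combination -hP
      rcases mul_eq_zero.mp hfac with h1 | h1
      · right; left
        rw [sub_eq_zero.mp ((pow_eq_zero_iff (by norm_num : (2:ℕ) ≠ 0)).mp h1)]
      · right; right; right; left
        rw [eq_neg_of_add_eq_zero_left h1]
    · -- y^2 - y + 1 = 0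
      have hyne1 : (1:ℂ) - y ≠ 0 := by
        intro h0
        rw [← (sub_eq_zero.mp h0)] at hyy
        norm_num at hyy
      have h1 : (1 - y) * (x - (y - 1)) = 0 := by
        linear_combination ((-1/3 : ℂ) + 2/3*y + 1/3*x) * hP +
          ((1/3 : ℂ) + 1/3*y - 2/3*y^2 + 1/3*y^3 + 1/3*x*y^2) * hQ +
          (1 - 2/3*y - 1/3*y^2 + x - 1/3*x*y - x*y^2 + 1/3*x*y^4 - 1/3*x^2 - 1/3*x^2*y + 1/3*x^2*y^2 + 1/3*x^2*y^3) * hyy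
      have hx' : x = y - 1 := sub_eq_zero.mp ((mul_eq_zero.mp h1).resolve_left hyne1)
      have hfac : (y - e) * (y - (starRingEnd ℂ) e) = 0 := by
        linear_combination hyy - y * hesum + heprod
      rcases mul_eq_zero.mp hfac with h2 | h2
      · right; right; right; right; left
        have hy2 : y = e := sub_eq_zero.mp h2
        have hx2 : x = e ^ 2 := by rw [hx', hy2]; linear_combination -hesq
        rw [hx2, hy2]
      · right; right; right; right; right
        have hy2 : y = (starRingEnd ℂ) e := sub_eq_zero.mp h2
        have hx2 : x = ((starRingEnd ℂ) e) ^ 2 := by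
          rw [hx', hy2]; linear_combination -hecsq
        rw [hx2, hy2]
  · rintro (h | h | h | h | h | h) <;>
      simp only [Prod.mk.injEq] at h <;> obtain ⟨hx', hy'⟩ := h <;> subst hx' <;> subst hy'
    · exact ⟨by simp, by simp, by ring⟩
    · exact ⟨by simp, by simp, by ring⟩
    · exact ⟨by simp, by simp, by ring⟩
    · exact ⟨by simp, by simp, by ring⟩
    · refine ⟨by rw [norm_pow, heabs]; norm_num, heabs, ?_⟩
      linear_combination (e^3*(1-e^2)*(e+1)) * hesq
    · refine ⟨?_, ?_, ?_⟩
      · rw [norm_pow, Complex.norm_conj, heabs]; norm_num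
      · rw [Complex.norm_conj]; exact heabs
      · linear_combination (((starRingEnd ℂ) e)^3*(1-((starRingEnd ℂ) e)^2)*(((starRingEnd ℂ) e)+1)) * hecsq
end
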